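/- The following values of complementary Ramsey numbers hold: R̄(3,3,3) = 5, R̄(4,3,3) = 5, R̄(5,3,3) = 5, and R̄(6,3,3) = 6. -/

import Mathlib

open Finset

/-- The color-`i` graph `f⁻¹(i)` of an edge `k`-coloring `f` of the complete
graph on `Fin n`. -/
def colorGraph {n k : ℕ} (f : Sym2 (Fin n) → Fin k) (i : Fin k) :
    SimpleGraph (Fin n) where
  Adj x y := x ≠ y ∧ f s(x, y) = i
  symm := ⟨by
    rintro x y ⟨hxy, hf⟩
    exact ⟨hxy.symm, by rwa [Sym2.eq_swap]⟩⟩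
  loopless := ⟨by rintro x ⟨h, -⟩; exact h rfl⟩

/-- `α_i(f) ≥ m` : the graph `f⁻¹(i)` has an independent set of size `m`. -/
def HasIndep {n k : ℕ} (f : Sym2 (Fin n) → Fin k) (i : Fin k) (m : ℕ) : Prop :=
  ∃ s : Finset (Fin n), s.card = m ∧ ∀ x ∈ s, ∀ y ∈ s, x ≠ y → f s(x, y) ≠ i

/-- `ω_i(f) ≥ m` : the graph `f⁻¹(i)` has a clique of size `m`. -/
def HasClique {n k : ℕ} (f : Sym2 (Fin n) → Fin k) (i : Fin k) (m : ℕ) : Prop :=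
  ∃ s : Finset (Fin n), s.card = m ∧ ∀ x ∈ s, ∀ y ∈ s, x ≠ y → f s(x, y) = i

/-- The complementary Ramsey number `R̄(m 0, …, m (k-1))`: the least `n` such
that every edge `k`-coloring of `K_n` admits a color `i` with `α_i(f) ≥ m i`. -/
noncomputable def cRamsey {k : ℕ} (m : Fin k → ℕ) : ℕ :=
  sInf {n : ℕ | ∀ f : Sym2 (Fin n) → Fin k, ∃ i : Fin k, HasIndep f i (m i)}

/-- `R̄(m; k)`, i.e. `R̄(m, …, m)` with `m` repeated `k` times. -/
noncomputable def cRamseyU (m k : ℕ) : ℕ := cRamsey (fun _ : Fin k => m)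

/-- The classical multicolor Ramsey number `R(m 0, …, m (k-1))`. -/
noncomputable def ramsey {k : ℕ} (m : Fin k → ℕ) : ℕ :=
  sInf {n : ℕ | ∀ f : Sym2 (Fin n) → Fin k, ∃ i : Fin k, HasClique f i (m i)}

/-- `G` is the disjoint union of `r` copies of `K_{q+1}` and `n - r` copies of
`K_q`: there is a partition of the vertices into `n` parts, `r` of size `q+1`
and `n - r` of size `q`, with two vertices adjacent iff they are distinct and
lie in a common part. -/
def IsCliquePartition {N : ℕ} (G : SimpleGraph (Fin N)) (n q r : ℕ) : Prop :=
  ∃ P : Fin N → Fin n,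
    (∀ x y, G.Adj x y ↔ x ≠ y ∧ P x = P y) ∧
    ∀ j : Fin n,
      (Finset.univ.filter (fun x => P x = j)).card = if (j : ℕ) < r then q + 1 else q

/-- The family `H` of spanning subgraphs is a factorization of the complete
graph: every edge of `K_N` lies in exactly one of the `H i`. -/
def IsFactorization {N k : ℕ} (H : Fin k → SimpleGraph (Fin N)) : Prop :=
  ∀ x y : Fin N, x ≠ y → ∃! i : Fin k, (H i).Adj x y

/-- `f_i(x)`: the number of vertices `y ≠ x` with `f({x, y}) = i`. -/
def degColor {n k : ℕ} (f : Sym2 (Fin n) → Fin k) (i : Fin k) (x : Fin n) : ℕ :=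
  (Finset.univ.filter (fun y => y ≠ x ∧ f s(x, y) = i)).card

/-- `t̄_n(m)`: the number of edges of `T̄_n(m) = r K_{q+1} ∪ (n-r) K_q`, where
`m = n * q + r` with `0 ≤ r < n`. -/
def tbar (n m : ℕ) : ℕ :=
  (m % n) * Nat.choose (m / n + 1) 2 + (n - m % n) * Nat.choose (m / n) 2

/-!
If no triangle is independent in colour `1` or in colour `2`, then every triangle contains an
edge of each of these colours. On at least five vertices this rules out an edge `xy` of any
other colour: each further vertex `z` would see `x` and `y` in the two colours `1`, `2`, and two
such vertices `z`, `w` seeing `x` in the same colour would force `zw` to carry both. So colour `0`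
is absent, which gives `R̄(m,3,3) ≤ 5` for `m ≤ 5`; on six vertices we are left with a
`2`-colouring of `K_6` without a monochromatic triangle, contradicting `R(3,3) = 6`.
The lower bounds come from the three perfect matchings of `K_4` and from the pentagon and
pentagram of `K_5`.
-/

namespace HasIndep

variable {n k : ℕ} {f : Sym2 (Fin n) → Fin k} {i : Fin k}

theorem mono {a b : ℕ} (h : HasIndep f i b) (hab : a ≤ b) : HasIndep f i a := by
  obtain ⟨s, hs, hind⟩ := h
  obtain ⟨t, hts, ht⟩ := Finset.exists_subset_card_eq (hs ▸ hab : a ≤ s.card)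
  exact ⟨t, ht, fun x hx y hy => hind x (hts hx) y (hts hy)⟩

theorem of_comp_map {n' m : ℕ} {g : Sym2 (Fin n') → Fin k} (e : Fin n ↪ Fin n')
    (h : HasIndep (g ∘ Sym2.map e) i m) : HasIndep g i m := by
  obtain ⟨s, hs, hind⟩ := h
  refine ⟨s.map e, by rw [card_map, hs], ?_⟩
  simp only [mem_map]
  rintro _ ⟨x, hx, rfl⟩ _ ⟨y, hy, rfl⟩ hxy
  exact hind x hx y hy (ne_of_apply_ne e hxy)

end HasIndep

theorem cRamsey_eq_succ {k N : ℕ} {m : Fin k → ℕ}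
    (hupper : ∀ f : Sym2 (Fin (N + 1)) → Fin k, ∃ i, HasIndep f i (m i))
    (f : Sym2 (Fin N) → Fin k) (hf : ∀ i, ¬ HasIndep f i (m i)) :
    cRamsey m = N + 1 := by
  refine le_antisymm (Nat.sInf_le hupper) (le_csInf ⟨_, hupper⟩ fun n hn => ?_)
  by_contra! hlt
  obtain ⟨i, hi⟩ := hn (f ∘ Sym2.map (Fin.castLEEmb (by omega)))
  exact hf i (hi.of_comp_map _)

section Triangles

variable {n k : ℕ} {f : Sym2 (Fin n) → Fin k} {a b : Fin k}

theorem hasIndep_three {x y z : Fin n} (hxy : x ≠ y) (hxz : x ≠ z) (hyz : y ≠ z)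
    (h₁ : f s(x, y) ≠ a) (h₂ : f s(x, z) ≠ a) (h₃ : f s(y, z) ≠ a) : HasIndep f a 3 := by
  refine ⟨{x, y, z}, card_eq_three.2 ⟨x, y, z, hxy, hxz, hyz, rfl⟩, ?_⟩
  simp only [mem_insert, mem_singleton]
  rintro u (rfl | rfl | rfl) v (rfl | rfl | rfl) huv <;>
    first
      | exact absurd rfl huv
      | assumption
      | rwa [Sym2.eq_swap]

theorem eq_of_not_hasIndep_three (ha : ¬ HasIndep f a 3) {x y z : Fin n} (hxy : x ≠ y)
    (hxz : x ≠ z) (hyz : y ≠ z) (h₁ : f s(x, y) ≠ a) (h₂ : f s(x, z) ≠ a) : f s(y, z) = a :=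
  by_contra fun h₃ => ha (hasIndep_three hxy hxz hyz h₁ h₂ h₃)

theorem hasIndep_three_of_star (hb : ¬ HasIndep f b 3) (hab : a ≠ b) {x y z w : Fin n}
    (hxy : x ≠ y) (hxz : x ≠ z) (hxw : x ≠ w) (hyz : y ≠ z) (hyw : y ≠ w) (hzw : z ≠ w)
    (hy : f s(x, y) = a) (hz : f s(x, z) = a) (hw : f s(x, w) = a) : HasIndep f a 3 := by
  have h_ne : ∀ {u v}, f s(u, v) = a → f s(u, v) ≠ b := fun h => h ▸ hab
  have hyz' := eq_of_not_hasIndep_three hb hxy hxz hyz (h_ne hy) (h_ne hz)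
  have hyw' := eq_of_not_hasIndep_three hb hxy hxw hyw (h_ne hy) (h_ne hw)
  have hzw' := eq_of_not_hasIndep_three hb hxz hxw hzw (h_ne hz) (h_ne hw)
  exact hasIndep_three hyz hyw hzw (hyz' ▸ hab.symm) (hyw' ▸ hab.symm) (hzw' ▸ hab.symm)

theorem hasIndep_three_or_of_fans (hab : a ≠ b) {x y z w : Fin n} (hxz : x ≠ z) (hxw : x ≠ w)
    (hyz : y ≠ z) (hyw : y ≠ w) (hzw : z ≠ w) (hxz' : f s(x, z) = a) (hxw' : f s(x, w) = a)
    (hyz' : f s(y, z) = b) (hyw' : f s(y, w) = b) : HasIndep f a 3 ∨ HasIndep f b 3 := by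
  by_contra! ⟨ha, hb⟩
  have hzw_b := eq_of_not_hasIndep_three hb hxz hxw hzw (hxz' ▸ hab) (hxw' ▸ hab)
  have hzw_a := eq_of_not_hasIndep_three ha hyz hyw hzw (hyz' ▸ hab.symm) (hyw' ▸ hab.symm)
  exact hab (hzw_a.symm.trans hzw_b)

theorem eq_or_eq_of_not_hasIndep_three (hn : 5 ≤ n) (hab : a ≠ b) (ha : ¬ HasIndep f a 3)
    (hb : ¬ HasIndep f b 3) {x y : Fin n} (hxy : x ≠ y) : f s(x, y) = a ∨ f s(x, y) = b := by
  by_contra! ⟨hxy_a, hxy_b⟩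
  set S := univ.filter fun z => x ≠ z ∧ y ≠ z
  have hS : ∀ z ∈ S, x ≠ z ∧ y ≠ z := fun z hz => (mem_filter.1 hz).2
  have hyz_b : ∀ z ∈ S, f s(x, z) = a → f s(y, z) = b := fun z hz h =>
    eq_of_not_hasIndep_three hb hxy (hS z hz).1 (hS z hz).2 hxy_b (h ▸ hab)
  have hyz_a : ∀ z ∈ S, f s(x, z) = b → f s(y, z) = a := fun z hz h =>
    eq_of_not_hasIndep_three ha hxy (hS z hz).1 (hS z hz).2 hxy_a (h ▸ hab.symm)
  have hxz : ∀ z ∈ S, f s(x, z) ∈ ({a, b} : Finset (Fin k)) := by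
    intro z hz
    by_cases h : f s(x, z) = a
    · simp [h]
    · have hyz := eq_of_not_hasIndep_three ha hxy (hS z hz).1 (hS z hz).2 hxy_a h
      have := eq_of_not_hasIndep_three hb hxy.symm (hS z hz).2 (hS z hz).1
        (by rwa [Sym2.eq_swap]) (hyz ▸ hab)
      simp [this]
  have hS_card : ({a, b} : Finset (Fin k)).card * 1 < S.card := by
    have : S = (univ.erase x).erase y := by ext z; simp [S, and_comm, eq_comm]
    rw [this, card_erase_of_mem (by simp [hxy.symm]), card_erase_of_mem (mem_univ _),
      card_univ, Fintype.card_fin]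
    have := card_le_two (a := a) (b := b)
    omega
  obtain ⟨c, hc, hfib⟩ := exists_lt_card_fiber_of_mul_lt_card_of_maps_to hxz hS_card
  obtain ⟨z, hz, w, hw, hzw⟩ := one_lt_card.1 hfib
  rw [mem_filter] at hz hw
  obtain ⟨hxz', hyz'⟩ := hS z hz.1
  obtain ⟨hxw', hyw'⟩ := hS w hw.1
  rcases mem_insert.1 hc with rfl | hc
  · exact (hasIndep_three_or_of_fans hab hxz' hxw' hyz' hyw' hzw hz.2 hw.2
      (hyz_b z hz.1 hz.2) (hyz_b w hw.1 hw.2)).elim ha hb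
  · rw [mem_singleton] at hc
    subst hc
    exact (hasIndep_three_or_of_fans hab.symm hxz' hxw' hyz' hyw' hzw hz.2 hw.2
      (hyz_a z hz.1 hz.2) (hyz_a w hw.1 hw.2)).elim hb ha

theorem hasIndep_univ_of_not_hasIndep_three (hn : 5 ≤ n) {c : Fin k} (hab : a ≠ b)
    (hca : c ≠ a) (hcb : c ≠ b) (ha : ¬ HasIndep f a 3) (hb : ¬ HasIndep f b 3) :
    HasIndep f c n := by
  refine ⟨univ, by simp, fun x _ y _ hxy => ?_⟩
  rcases eq_or_eq_of_not_hasIndep_three hn hab ha hb hxy with h | h <;> rw [h]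
  exacts [hca.symm, hcb.symm]

theorem hasIndep_three_or_hasIndep_three (hn : 6 ≤ n) (hab : a ≠ b) :
    HasIndep f a 3 ∨ HasIndep f b 3 := by
  by_contra! ⟨ha, hb⟩
  set x : Fin n := ⟨0, by omega⟩
  have hcol : ∀ z ∈ univ.erase x, f s(x, z) ∈ ({a, b} : Finset (Fin k)) := fun z hz => by
    rcases eq_or_eq_of_not_hasIndep_three (by omega) hab ha hb (ne_of_mem_erase hz).symm
      with h | h <;> simp [h]
  have hcard : ({a, b} : Finset (Fin k)).card * 2 < (univ.erase x).card := by
    rw [card_erase_of_mem (mem_univ _), card_univ, Fintype.card_fin]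
    have := card_le_two (a := a) (b := b)
    omega
  obtain ⟨c, hc, hfib⟩ := exists_lt_card_fiber_of_mul_lt_card_of_maps_to hcol hcard
  obtain ⟨y, hy, z, hz, w, hw, hyz, hyw, hzw⟩ := two_lt_card.1 hfib
  simp only [mem_filter, mem_erase] at hy hz hw
  rcases mem_insert.1 hc with rfl | hc
  · exact ha (hasIndep_three_of_star hb hab hy.1.1.symm hz.1.1.symm hw.1.1.symm hyz hyw hzw
      hy.2 hz.2 hw.2)
  · rw [mem_singleton] at hc
    subst hc
    exact hb (hasIndep_three_of_star ha hab.symm hy.1.1.symm hz.1.1.symm hw.1.1.symm hyz hyw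
      hzw hy.2 hz.2 hw.2)

end Triangles

/-- Each colour class is a perfect matching of `K_4`: `x xor y ∈ {1, 2, 3}` names the matching
containing `{x, y}`. -/
def matchingColoring : Sym2 (Fin 4) → Fin 3 :=
  Sym2.lift ⟨fun x y => if x.val ^^^ y.val = 1 then 0 else if x.val ^^^ y.val = 2 then 1 else 2,
    by decide⟩

def pentagonColoring : Sym2 (Fin 5) → Fin 3 :=
  Sym2.lift ⟨fun x y => if x + 1 = y ∨ y + 1 = x then 1 else 2, fun x y => by simp only [or_comm]⟩

theorem not_hasIndep_matchingColoring (i : Fin 3) : ¬ HasIndep matchingColoring i 3 := by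
  revert i
  unfold HasIndep
  decide

theorem not_hasIndep_pentagonColoring (i : Fin 3) :
    ¬ HasIndep pentagonColoring i (![6, 3, 3] i) := by
  revert i
  unfold HasIndep
  decide

theorem cRamsey_three_three_eq_five {m : ℕ} (hm₃ : 3 ≤ m) (hm₅ : m ≤ 5) :
    cRamsey ![m, 3, 3] = 5 := by
  refine cRamsey_eq_succ (fun f => ?_) matchingColoring fun i hi => ?_
  · by_cases h₁ : HasIndep f 1 3
    · exact ⟨1, h₁⟩
    by_cases h₂ : HasIndep f 2 3
    · exact ⟨2, h₂⟩
    exact ⟨0, (hasIndep_univ_of_not_hasIndep_three le_rfl (by decide) (by decide) (by decide)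
      h₁ h₂).mono hm₅⟩
  · refine not_hasIndep_matchingColoring i (hi.mono ?_)
    fin_cases i <;> simp [hm₃]

theorem cRamsey_six_three_three : cRamsey ![6, 3, 3] = 6 := by
  refine cRamsey_eq_succ (fun f => ?_) pentagonColoring not_hasIndep_pentagonColoring
  rcases hasIndep_three_or_hasIndep_three (f := f) le_rfl (by decide : (1 : Fin 3) ≠ 2) with h | h
  exacts [⟨1, h⟩, ⟨2, h⟩]

/-- `R̄(3,3,3) = 5`, `R̄(4,3,3) = 5`, `R̄(5,3,3) = 5`, `R̄(6,3,3) = 6`. -/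
theorem cRamsey_small_values_one :
    cRamsey ![3, 3, 3] = 5 ∧ cRamsey ![4, 3, 3] = 5 ∧
      cRamsey ![5, 3, 3] = 5 ∧ cRamsey ![6, 3, 3] = 6 :=
  ⟨cRamsey_three_three_eq_five le_rfl (by norm_num), cRamsey_three_three_eq_five (by norm_num)
    (by norm_num), cRamsey_three_three_eq_five (by norm_num) le_rfl, cRamsey_six_three_three⟩
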